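/- arXiv:2011.07833 — 6 statements merged into one kernel-verified Lean document; each statement's English description precedes it below -/
import Mathlib

section
/- Let A be a real n×N matrix, B a real n×q matrix, W a real q×m matrix, U₀ a real m×T matrix, Ū₀ a real q×T matrix, D₀ and X₁ real n×T matrices, Z₀ a real N×T matrix, Y a real T×p matrix, H a real N×p matrix, and P an invertible real p×p matrix. Assume the data equation X₁ = A·Z₀ + B·Ū₀ + D₀ and the consistency condition Z₀·Y = H·P. Define E := [B D₀] (n×(q+T) block matrix) and Û₀ := [Ū₀ − W·U₀ ; I_T] (vertical block stacking of the q×T matrix Ū₀ − W·U₀ on top of the T×T identity, a (q+T)×T matrix). Then A·H·P + B·W·U₀·Y = (X₁ − E·Û₀)·Y. (This is the data-based representation of the closed-loop dynamics.) -/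
open Matrix

/- Substituting the data equation, the stacked term `E Û₀ = B (Ū₀ - W U₀) + D₀` removes the
measured input and the disturbance from `X₁`, leaving `A Z₀ + B W U₀`; right multiplication by `Y`
and the consistency condition `Z₀ Y = H P` then give the closed loop. -/

theorem sub_fromCols_mul_fromRows_sub_one {R l n o t : Type*} [Ring R]
    [Fintype n] [Fintype o] [Fintype t] [DecidableEq t]
    (A : Matrix l n R) (B : Matrix l o R) (Z₀ : Matrix n t R) (Ubar₀ K : Matrix o t R)
    (D₀ X₁ : Matrix l t R) (hdata : X₁ = A * Z₀ + B * Ubar₀ + D₀) :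
    X₁ - fromCols B D₀ * fromRows (Ubar₀ - K) (1 : Matrix t t R) = A * Z₀ + B * K := by
  rw [hdata, fromCols_mul_fromRows, Matrix.mul_one, Matrix.mul_sub]
  abel

theorem data_based_closed_loop_general {n N q m T p : ℕ}
    (A : Matrix (Fin n) (Fin N) ℝ) (B : Matrix (Fin n) (Fin q) ℝ)
    (W : Matrix (Fin q) (Fin m) ℝ) (U₀ : Matrix (Fin m) (Fin T) ℝ)
    (Ubar₀ : Matrix (Fin q) (Fin T) ℝ)
    (D₀ X₁ : Matrix (Fin n) (Fin T) ℝ)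
    (Z₀ : Matrix (Fin N) (Fin T) ℝ)
    (Y : Matrix (Fin T) (Fin p) ℝ) (H : Matrix (Fin N) (Fin p) ℝ)
    (P : Matrix (Fin p) (Fin p) ℝ)
    (hdata : X₁ = A * Z₀ + B * Ubar₀ + D₀)
    (hcons : Z₀ * Y = H * P) :
    A * H * P + B * W * U₀ * Y
      = (X₁ - (fromCols B D₀) * (fromRows (Ubar₀ - W * U₀) (1 : Matrix (Fin T) (Fin T) ℝ))) * Y := by
  rw [sub_fromCols_mul_fromRows_sub_one A B Z₀ Ubar₀ (W * U₀) D₀ X₁ hdata, Matrix.add_mul,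
    Matrix.mul_assoc A Z₀, hcons, Matrix.mul_assoc A, Matrix.mul_assoc B]

/-- Data-based representation of the closed-loop dynamics:
under the data equation `X₁ = A Z₀ + B Ū₀ + D₀` and the consistency condition
`Z₀ Y = H P`, with `E := [B D₀]` and `Û₀ := [Ū₀ − W U₀ ; I_T]`, one has
`A H P + B W U₀ Y = (X₁ − E Û₀) Y`. -/
theorem data_based_closed_loop {n N q m T p : ℕ}
    (A : Matrix (Fin n) (Fin N) ℝ) (B : Matrix (Fin n) (Fin q) ℝ)
    (W : Matrix (Fin q) (Fin m) ℝ) (U₀ : Matrix (Fin m) (Fin T) ℝ)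
    (Ubar₀ : Matrix (Fin q) (Fin T) ℝ)
    (D₀ X₁ : Matrix (Fin n) (Fin T) ℝ)
    (Z₀ : Matrix (Fin N) (Fin T) ℝ)
    (Y : Matrix (Fin T) (Fin p) ℝ) (H : Matrix (Fin N) (Fin p) ℝ)
    (P : Matrix (Fin p) (Fin p) ℝ) (hP : IsUnit P)
    (hdata : X₁ = A * Z₀ + B * Ubar₀ + D₀)
    (hcons : Z₀ * Y = H * P) :
    A * H * P + B * W * U₀ * Y
      = (X₁ - (fromCols B D₀) * (fromRows (Ubar₀ - W * U₀) (1 : Matrix (Fin T) (Fin T) ℝ))) * Y :=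
  data_based_closed_loop_general A B W U₀ Ubar₀ D₀ X₁ Z₀ Y H P hdata hcons
end

section
/- Let G be a real p×n matrix, X₁ a real n×T matrix, E a real n×(q+T) matrix, Û a real (q+T)×T matrix, Y a real T×p matrix, and R_E a real n×(q+T) matrix. Assume E·Eᵀ ⪯ R_E·R_Eᵀ, let ε₁ ≥ 0 and ε₂ > 0 be real numbers, set Υ_E := −G·X₁·Y − Yᵀ·X₁ᵀ·Gᵀ − ε₂·G·R_E·R_Eᵀ·Gᵀ, and assume that the (p+q+T)×(p+q+T) block matrix [[Υ_E − ε₁·I_p, Yᵀ·Ûᵀ], [Û·Y, ε₂·I_{q+T}]] is positive semidefinite. Then −G·(X₁ − E·Û)·Y − Yᵀ·(X₁ − E·Û)ᵀ·Gᵀ ⪰ ε₁·I_p. (Pointwise form of the robust stabilization condition of Theorem 1.) -/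
open Matrix
open scoped ComplexOrder

/-! The Schur complement of the block `ε₂ I` gives `Υ_E - ε₁ I ⪰ ε₂⁻¹ Yᵀ Ûᵀ Û Y`. The perturbation
`E Û` contributes the cross term `G E Û Y + (G E Û Y)ᵀ`, which by Young's inequality for matrices is
`⪰ -ε₂ G E Eᵀ Gᵀ - ε₂⁻¹ Yᵀ Ûᵀ Û Y`; since `E Eᵀ ⪯ R_E R_Eᵀ`, the first of these terms is absorbed by
the `ε₂ G R_E R_Eᵀ Gᵀ` inside `Υ_E`. -/

namespace Matrix

variable {m n 𝕜 : Type*} [Fintype m] [Fintype n] [DecidableEq n] [RCLike 𝕜]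

theorem PosSemidef.sub_inv_smul_mul_conjTranspose_of_fromBlocks_smul_one
    {A : Matrix m m 𝕜} {B : Matrix m n 𝕜} {c : ℝ} (hc : 0 < c)
    (h : (fromBlocks A B Bᴴ (c • 1)).PosSemidef) : (A - c⁻¹ • (B * Bᴴ)).PosSemidef := by
  have hD : (c • 1 : Matrix n n 𝕜).PosDef := PosDef.one.smul hc
  have hinv : (c • 1 : Matrix n n 𝕜) * (c⁻¹ • 1) = 1 := by
    rw [smul_mul_smul_comm, one_mul, mul_inv_cancel₀ hc.ne', one_smul]
  let := invertibleOfRightInverse _ _ hinv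
  simpa [inv_eq_right_inv hinv, Matrix.mul_smul] using (PosDef.fromBlocks₂₂ A B hD).mp h

theorem posSemidef_smul_mul_conjTranspose_add_add_add_inv_smul {k : Type*} [Fintype k]
    (X : Matrix m k 𝕜) (Y : Matrix k m 𝕜) {c : ℝ} (hc : 0 < c) :
    (c • (X * Xᴴ) + X * Y + Yᴴ * Xᴴ + c⁻¹ • (Yᴴ * Y)).PosSemidef := by
  have hsq : c • ((X + c⁻¹ • Yᴴ) * (X + c⁻¹ • Yᴴ)ᴴ)
      = c • (X * Xᴴ) + X * Y + Yᴴ * Xᴴ + c⁻¹ • (Yᴴ * Y) := by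
    simp only [conjTranspose_add, conjTranspose_smul, conjTranspose_conjTranspose, star_trivial,
      Matrix.add_mul, Matrix.mul_add, Matrix.smul_mul, Matrix.mul_smul, smul_add, smul_smul,
      mul_inv_cancel₀ hc.ne', one_smul]
    rw [← mul_assoc, mul_inv_cancel₀ hc.ne', one_mul]
    abel
  exact hsq ▸ (posSemidef_self_mul_conjTranspose _).smul hc.le

end Matrix

theorem robust_stabilization_pointwise_general {p n T q : ℕ}
    (G : Matrix (Fin p) (Fin n) ℝ) (X₁ : Matrix (Fin n) (Fin T) ℝ)
    (E : Matrix (Fin n) (Fin (q + T)) ℝ) (Uhat : Matrix (Fin (q + T)) (Fin T) ℝ)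
    (Y : Matrix (Fin T) (Fin p) ℝ) (R_E : Matrix (Fin n) (Fin (q + T)) ℝ)
    (hE : (R_E * R_Eᵀ - E * Eᵀ).PosSemidef)
    (ε₁ ε₂ : ℝ) (hε₂ : 0 < ε₂)
    (hblock : (fromBlocks
        ((-(G * X₁ * Y) - Yᵀ * X₁ᵀ * Gᵀ - ε₂ • (G * R_E * R_Eᵀ * Gᵀ))
          - ε₁ • (1 : Matrix (Fin p) (Fin p) ℝ))
        (Yᵀ * Uhatᵀ) (Uhat * Y)
        (ε₂ • (1 : Matrix (Fin (q + T)) (Fin (q + T)) ℝ))).PosSemidef) :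
    ((-(G * (X₁ - E * Uhat) * Y) - Yᵀ * (X₁ - E * Uhat)ᵀ * Gᵀ)
      - ε₁ • (1 : Matrix (Fin p) (Fin p) ℝ)).PosSemidef := by
  have hUY : Uhat * Y = (Yᵀ * Uhatᵀ)ᴴ := by
    rw [conjTranspose_eq_transpose_of_trivial, transpose_mul, transpose_transpose,
      transpose_transpose]
  rw [hUY] at hblock
  have hschur := hblock.sub_inv_smul_mul_conjTranspose_of_fromBlocks_smul_one hε₂
  have hbound := (hE.mul_mul_conjTranspose_same G).smul hε₂.le
  have hyoung := posSemidef_smul_mul_conjTranspose_add_add_add_inv_smul (G * E) (Uhat * Y) hε₂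
  rw [← hUY] at hschur
  simp only [conjTranspose_eq_transpose_of_trivial] at hbound hyoung
  have hsum : -(G * (X₁ - E * Uhat) * Y) - Yᵀ * (X₁ - E * Uhat)ᵀ * Gᵀ - ε₁ • 1 =
      (-(G * X₁ * Y) - Yᵀ * X₁ᵀ * Gᵀ - ε₂ • (G * R_E * R_Eᵀ * Gᵀ) - ε₁ • 1
          - ε₂⁻¹ • (Yᵀ * Uhatᵀ * (Uhat * Y)))
        + ε₂ • (G * (R_E * R_Eᵀ - E * Eᵀ) * Gᵀ)
        + (ε₂ • (G * E * (G * E)ᵀ) + G * E * (Uhat * Y) + (Uhat * Y)ᵀ * (G * E)ᵀ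
          + ε₂⁻¹ • ((Uhat * Y)ᵀ * (Uhat * Y))) := by
    simp only [transpose_mul, transpose_sub, Matrix.mul_sub,
      Matrix.sub_mul, smul_sub, Matrix.mul_assoc]
    abel
  exact hsum ▸ (hschur.add hbound).add hyoung

/-- Pointwise form of the robust stabilization condition of Theorem 1:
if `E Eᵀ ⪯ R_E R_Eᵀ`, `ε₁ ≥ 0`, `ε₂ > 0`, and the block matrix
`[[Υ_E − ε₁ I, Yᵀ Ûᵀ], [Û Y, ε₂ I]]` with
`Υ_E := −G X₁ Y − Yᵀ X₁ᵀ Gᵀ − ε₂ G R_E R_Eᵀ Gᵀ` is positive semidefinite,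
then `−G (X₁ − E Û) Y − Yᵀ (X₁ − E Û)ᵀ Gᵀ ⪰ ε₁ I`. -/
theorem robust_stabilization_pointwise {p n T q : ℕ}
    (G : Matrix (Fin p) (Fin n) ℝ) (X₁ : Matrix (Fin n) (Fin T) ℝ)
    (E : Matrix (Fin n) (Fin (q + T)) ℝ) (Uhat : Matrix (Fin (q + T)) (Fin T) ℝ)
    (Y : Matrix (Fin T) (Fin p) ℝ) (R_E : Matrix (Fin n) (Fin (q + T)) ℝ)
    (hE : (R_E * R_Eᵀ - E * Eᵀ).PosSemidef)
    (ε₁ ε₂ : ℝ) (hε₁ : 0 ≤ ε₁) (hε₂ : 0 < ε₂)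
    (hblock : (fromBlocks
        ((-(G * X₁ * Y) - Yᵀ * X₁ᵀ * Gᵀ - ε₂ • (G * R_E * R_Eᵀ * Gᵀ))
          - ε₁ • (1 : Matrix (Fin p) (Fin p) ℝ))
        (Yᵀ * Uhatᵀ) (Uhat * Y)
        (ε₂ • (1 : Matrix (Fin (q + T)) (Fin (q + T)) ℝ))).PosSemidef) :
    ((-(G * (X₁ - E * Uhat) * Y) - Yᵀ * (X₁ - E * Uhat)ᵀ * Gᵀ)
      - ε₁ • (1 : Matrix (Fin p) (Fin p) ℝ)).PosSemidef :=
  robust_stabilization_pointwise_general G X₁ E Uhat Y R_E hE ε₁ ε₂ hε₂ hblock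
end

section
/- Consider the nonlinear system ẋ = A·Z(x) + B·W(x)·u with state x ∈ ℝⁿ and input u ∈ ℝᵐ, where A is a real n×N matrix, B a real n×q matrix, Z : ℝⁿ → ℝᴺ, and W : ℝⁿ → ℝ^{q×m}. Let Ẑ : ℝⁿ → ℝᵖ be differentiable and H : ℝⁿ → ℝ^{N×p} satisfy Z(x) = H(x)·Ẑ(x) for all x. Let U₀ ∈ ℝ^{m×T}, Z₀ ∈ ℝ^{N×T}, Ū₀ ∈ ℝ^{q×T}, D₀, X₁ ∈ ℝ^{n×T} satisfy the data equation X₁ = A·Z₀ + B·Ū₀ + D₀, and assume D₀·D₀ᵀ ⪯ R_D·R_Dᵀ and B·Bᵀ ⪯ R_B·R_Bᵀ for given R_D ∈ ℝ^{n×T}, R_B ∈ ℝ^{n×q}; set R_E := [R_B R_D]. Suppose there exist a positive definite P ∈ ℝ^{p×p}, a map Y : ℝⁿ → ℝ^{T×p}, a function ε₁ : ℝⁿ → ℝ with ε₁(x) ≥ 0, and a constant ε₂ > 0 such that for all x ∈ ℝⁿ: (i) Z₀·Y(x) = H(x)·P, and (ii) with G(x) := the Jacobian ∂Ẑ/∂x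 (a p×n matrix), Û₀(x) := [Ū₀ − W(x)·U₀ ; I_T], and Υ_E(x) := −G(x)·X₁·Y(x) − Y(x)ᵀ·X₁ᵀ·G(x)ᵀ − ε₂·G(x)·R_E·R_Eᵀ·G(x)ᵀ, the block matrix [[Υ_E(x) − ε₁(x)·I_p, Y(x)ᵀ·Û₀(x)ᵀ], [Û₀(x)·Y(x), ε₂·I_{q+T}]] is positive semidefinite. Then, under the feedback u = U₀·Y(x)·P⁻¹·Ẑ(x), for every differentiable solution x : ℝ → ℝⁿ of the closed-loop system ẋ = A·Z(x) + B·W(x)·U₀·Y(x)·P⁻¹·Ẑ(x), the function t ↦ V(x(t)) with V(x) = Ẑ(x)ᵀ·P⁻¹·Ẑ(x) has derivative at every time t satisfying d/dt V(x(t)) ≤ −ε₁(x(t))·Ẑ(x(t))ᵀ·P⁻¹·P⁻¹·Ẑ(x(t)). (Lyapunov decrease conclusion of Theorem 1, with the SOS conditions relaxed to pointwise positive semidefiniteness.) -/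
/-!
With `w := P⁻¹ Ẑ(x)`, condition (i) and the data equation turn the closed loop into
`ẋ = (X₁ - [B D₀] Û₀) Y(x) w`, so `V̇ = wᵀ (M + Mᵀ) w` for `M := G(X₁ - [B D₀] Û₀) Y`.
Compressing the block matrix of (ii) to the graph of `w ↦ [B D₀]ᵀ G(x)ᵀ w` and adding
`ε₂ G ([R_B R_D][R_B R_D]ᵀ - [B D₀][B D₀]ᵀ) Gᵀ ⪰ 0` gives `M + Mᵀ ⪯ -ε₁ I`.
-/

open Matrix

theorem HasDerivAt.dotProduct_mulVec_self {ι : Type*} [Fintype ι] {M : Matrix ι ι ℝ}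
    (hM : M.IsSymm) {f : ℝ → ι → ℝ} {f' : ι → ℝ} {t : ℝ} (hf : HasDerivAt f f' t) :
    HasDerivAt (fun s => f s ⬝ᵥ M *ᵥ f s) (2 * (M *ᵥ f t ⬝ᵥ f')) t := by
  have hcoord : ∀ i, HasDerivAt (fun s => f s i) (f' i) t := hasDerivAt_pi.1 hf
  have hMf : ∀ i, HasDerivAt (fun s => (M *ᵥ f s) i) ((M *ᵥ f') i) t := fun i => by
    simpa [mulVec, dotProduct] using
      HasDerivAt.fun_sum fun j (_ : j ∈ Finset.univ) => (hcoord j).const_mul (M i j)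
  refine (HasDerivAt.fun_sum fun i (_ : i ∈ Finset.univ) =>
    (hcoord i).mul (hMf i)).congr_deriv ?_
  have hsymm : f t ⬝ᵥ M *ᵥ f' = M *ᵥ f t ⬝ᵥ f' := by
    rw [dotProduct_mulVec, ← mulVec_transpose, hM.eq]
  rw [Finset.sum_add_distrib]
  change f' ⬝ᵥ M *ᵥ f t + f t ⬝ᵥ M *ᵥ f' = _
  rw [hsymm, dotProduct_comm, two_mul]

theorem Matrix.PosSemidef.fromCols_mul_transpose_sub {m n₁ n₂ : Type*} [Fintype n₁]
    [Fintype n₂] {R₁ B₁ : Matrix m n₁ ℝ} {R₂ B₂ : Matrix m n₂ ℝ}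
    (h₁ : (R₁ * R₁ᵀ - B₁ * B₁ᵀ).PosSemidef) (h₂ : (R₂ * R₂ᵀ - B₂ * B₂ᵀ).PosSemidef) :
    (fromCols R₁ R₂ * (fromCols R₁ R₂)ᵀ - fromCols B₁ B₂ * (fromCols B₁ B₂)ᵀ).PosSemidef := by
  convert h₁.add h₂ using 1
  simp only [transpose_fromCols, fromCols_mul_fromRows]
  abel

theorem Matrix.PosSemidef.fromBlocks_conj_fromRows_one {ι κ : Type*} [Fintype ι] [Fintype κ]
    {A : Matrix ι ι ℝ} {B : Matrix ι κ ℝ} {C : Matrix κ ι ℝ} {D : Matrix κ κ ℝ}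
    (h : (fromBlocks A B C D).PosSemidef) (F : Matrix κ ι ℝ) :
    (A + B * F + Fᵀ * C + Fᵀ * D * F).PosSemidef := by
  classical
  have := h.conjTranspose_mul_mul_same (fromRows 1 F)
  rwa [conjTranspose_eq_transpose_of_trivial, transpose_fromRows, Matrix.mul_assoc,
    fromBlocks_mul_fromRows, fromCols_mul_fromRows, transpose_one, Matrix.one_mul,
    Matrix.mul_one, Matrix.mul_one, Matrix.mul_add, ← add_assoc, ← Matrix.mul_assoc] at this

theorem Matrix.two_mul_dotProduct_mulVec_le_of_posSemidef {ι : Type*} [Fintype ι]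
    [DecidableEq ι] {M : Matrix ι ι ℝ} {c : ℝ} (h : (-M - Mᵀ - c • 1).PosSemidef)
    (w : ι → ℝ) : 2 * (w ⬝ᵥ M *ᵥ w) ≤ -c * (w ⬝ᵥ w) := by
  have hq := h.dotProduct_mulVec_nonneg w
  have hT : w ⬝ᵥ Mᵀ *ᵥ w = w ⬝ᵥ M *ᵥ w := by
    rw [dotProduct_mulVec, vecMul_transpose, dotProduct_comm]
  simp only [star_trivial, sub_mulVec, neg_mulVec, smul_mulVec, one_mulVec, dotProduct_sub,
    dotProduct_neg, dotProduct_smul, hT, smul_eq_mul] at hq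
  linarith

theorem closedLoop_eq_dataBased {ι ν τ σ ρ μ : Type*} [Fintype ι] [Fintype τ] [Fintype σ]
    [Fintype ρ] [Fintype μ] [DecidableEq ι] [DecidableEq τ] {A : Matrix ν μ ℝ}
    {H : Matrix μ ι ℝ} {Z₀ : Matrix μ τ ℝ} {B : Matrix ν σ ℝ} {Ubar₀ : Matrix σ τ ℝ}
    {D₀ X₁ : Matrix ν τ ℝ} {W : Matrix σ ρ ℝ} {U₀ : Matrix ρ τ ℝ} {Y : Matrix τ ι ℝ}
    {P : Matrix ι ι ℝ} (hdata : X₁ = A * Z₀ + B * Ubar₀ + D₀) (hcons : Z₀ * Y = H * P)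
    (hP : IsUnit P.det) :
    A * H + B * W * U₀ * Y * P⁻¹
      = (X₁ - fromCols B D₀ * fromRows (Ubar₀ - W * U₀) (1 : Matrix τ τ ℝ)) * Y * P⁻¹ := by
  have hAH : A * H = A * Z₀ * Y * P⁻¹ := by
    rw [Matrix.mul_assoc A, hcons, ← Matrix.mul_assoc, mul_nonsing_inv_cancel_right _ _ hP]
  rw [hAH, fromCols_mul_fromRows, hdata]
  simp only [Matrix.sub_mul, Matrix.add_mul, Matrix.mul_sub, Matrix.mul_one, Matrix.mul_assoc]
  abel

theorem posSemidef_closedLoop_lyapunov_of_fromBlocks {ι κ ν τ : Type*} [Fintype ι]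
    [Fintype κ] [Fintype ν] [Fintype τ] [DecidableEq ι] [DecidableEq κ]
    {G : Matrix ι ν ℝ} {X : Matrix ν τ ℝ} {Y : Matrix τ ι ℝ} {R E : Matrix ν κ ℝ}
    {U : Matrix κ τ ℝ} {ε₁ ε₂ : ℝ} (hRE : (R * Rᵀ - E * Eᵀ).PosSemidef) (hε₂ : 0 ≤ ε₂)
    (h : (fromBlocks (-(G * X * Y) - Yᵀ * Xᵀ * Gᵀ - ε₂ • (G * R * Rᵀ * Gᵀ) - ε₁ • 1)
      (Yᵀ * Uᵀ) (U * Y) (ε₂ • 1)).PosSemidef) :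
    (-(G * (X - E * U) * Y) - (G * (X - E * U) * Y)ᵀ - ε₁ • 1).PosSemidef := by
  have hGRE := (hRE.mul_mul_conjTranspose_same G).smul hε₂
  rw [conjTranspose_eq_transpose_of_trivial] at hGRE
  convert (h.fromBlocks_conj_fromRows_one (Eᵀ * Gᵀ)).add hGRE using 1
  simp only [transpose_mul, transpose_sub, transpose_transpose, Matrix.mul_sub, Matrix.sub_mul,
    Matrix.mul_smul, Matrix.smul_mul, Matrix.mul_one, Matrix.mul_assoc, smul_sub]
  abel

theorem lyapunov_decrease_thm1_general {n m N q p T : ℕ}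
    (A : Matrix (Fin n) (Fin N) ℝ) (B : Matrix (Fin n) (Fin q) ℝ)
    (Zf : (Fin n → ℝ) → (Fin N → ℝ))
    (W : (Fin n → ℝ) → Matrix (Fin q) (Fin m) ℝ)
    (Zhat : (Fin n → ℝ) → (Fin p → ℝ))
    (Hm : (Fin n → ℝ) → Matrix (Fin N) (Fin p) ℝ)
    (G : (Fin n → ℝ) → Matrix (Fin p) (Fin n) ℝ)
    -- `Ẑ` is differentiable with Jacobian `G(x)` at every point
    (hZhat : ∀ y : Fin n → ℝ,
      HasFDerivAt Zhat ((Matrix.mulVecLin (G y)).toContinuousLinearMap) y)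
    -- `Z(x) = H(x) Ẑ(x)`
    (hZH : ∀ y : Fin n → ℝ, Zf y = (Hm y).mulVec (Zhat y))
    (U₀ : Matrix (Fin m) (Fin T) ℝ) (Z₀ : Matrix (Fin N) (Fin T) ℝ)
    (Ubar₀ : Matrix (Fin q) (Fin T) ℝ)
    (D₀ X₁ : Matrix (Fin n) (Fin T) ℝ)
    (R_D : Matrix (Fin n) (Fin T) ℝ) (R_B : Matrix (Fin n) (Fin q) ℝ)
    -- the data equation
    (hdata : X₁ = A * Z₀ + B * Ubar₀ + D₀)
    -- bounds on the noise and on `B`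
    (hD : (R_D * R_Dᵀ - D₀ * D₀ᵀ).PosSemidef)
    (hB : (R_B * R_Bᵀ - B * Bᵀ).PosSemidef)
    (P : Matrix (Fin p) (Fin p) ℝ) (hP : P.PosDef)
    (Y : (Fin n → ℝ) → Matrix (Fin T) (Fin p) ℝ)
    (ε₁ : (Fin n → ℝ) → ℝ)
    (ε₂ : ℝ) (hε₂ : 0 < ε₂)
    -- consistency condition (i): `Z₀ Y(x) = H(x) P`
    (hcons : ∀ y : Fin n → ℝ, Z₀ * Y y = Hm y * P)
    -- pointwise positive semidefiniteness condition (ii)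
    (hblock : ∀ y : Fin n → ℝ,
      (fromBlocks
        ((-(G y * X₁ * Y y) - (Y y)ᵀ * X₁ᵀ * (G y)ᵀ
            - ε₂ • (G y * (fromCols R_B R_D) * (fromCols R_B R_D)ᵀ * (G y)ᵀ))
          - ε₁ y • (1 : Matrix (Fin p) (Fin p) ℝ))
        ((Y y)ᵀ * (fromRows (Ubar₀ - W y * U₀) (1 : Matrix (Fin T) (Fin T) ℝ))ᵀ)
        ((fromRows (Ubar₀ - W y * U₀) (1 : Matrix (Fin T) (Fin T) ℝ)) * Y y)
        (ε₂ • (1 : Matrix (Fin q ⊕ Fin T) (Fin q ⊕ Fin T) ℝ))).PosSemidef)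
    -- a differentiable solution of the closed-loop system
    (x : ℝ → (Fin n → ℝ))
    (hx : ∀ t : ℝ, HasDerivAt x
      (A.mulVec (Zf (x t)) + (B * W (x t) * U₀ * Y (x t) * P⁻¹).mulVec (Zhat (x t))) t) :
    ∀ t : ℝ, ∃ d : ℝ,
      HasDerivAt (fun s => Zhat (x s) ⬝ᵥ (P⁻¹.mulVec (Zhat (x s)))) d t ∧
      d ≤ -(ε₁ (x t)) * (Zhat (x t) ⬝ᵥ ((P⁻¹ * P⁻¹).mulVec (Zhat (x t)))) := by
  intro t
  set y := x t
  set K := fromCols B D₀ * fromRows (Ubar₀ - W y * U₀) (1 : Matrix (Fin T) (Fin T) ℝ)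
  set w := P⁻¹ *ᵥ Zhat y
  have hPinv : P⁻¹.IsSymm := isHermitian_iff_isSymm.1 hP.inv.isHermitian
  have hflow : HasDerivAt (fun s => Zhat (x s))
      (G y *ᵥ ((X₁ - K) * Y y * P⁻¹) *ᵥ Zhat y) t := by
    have h := (hZhat y).comp_hasDerivAt t (hx t)
    rwa [hZH, mulVec_mulVec, ← add_mulVec,
      closedLoop_eq_dataBased hdata (hcons y) hP.det_pos.ne'.isUnit] at h
  refine ⟨_, hflow.dotProduct_mulVec_self hPinv, ?_⟩
  have hLMI := posSemidef_closedLoop_lyapunov_of_fromBlocks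
    (hB.fromCols_mul_transpose_sub hD) hε₂.le (hblock y)
  calc 2 * (w ⬝ᵥ G y *ᵥ ((X₁ - K) * Y y * P⁻¹) *ᵥ Zhat y)
      = 2 * (w ⬝ᵥ (G y * (X₁ - K) * Y y) *ᵥ w) := by
        simp only [w, mulVec_mulVec, Matrix.mul_assoc]
    _ ≤ -ε₁ y * (w ⬝ᵥ w) := two_mul_dotProduct_mulVec_le_of_posSemidef hLMI w
    _ = -ε₁ y * (Zhat y ⬝ᵥ (P⁻¹ * P⁻¹) *ᵥ Zhat y) := by
        rw [← mulVec_mulVec, dotProduct_mulVec (Zhat y), ← mulVec_transpose, hPinv.eq]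

/-- Lyapunov decrease conclusion of Theorem 1 (noisy-data stabilization of polynomial
systems), with the SOS conditions relaxed to pointwise positive semidefiniteness:
along every solution of the closed-loop system
`ẋ = A Z(x) + B W(x) U₀ Y(x) P⁻¹ Ẑ(x)`, the function `V(x) = Ẑ(x)ᵀ P⁻¹ Ẑ(x)`
satisfies `d/dt V(x(t)) ≤ −ε₁(x(t)) Ẑ(x(t))ᵀ P⁻¹ P⁻¹ Ẑ(x(t))`. -/
theorem lyapunov_decrease_thm1 {n m N q p T : ℕ}
    (A : Matrix (Fin n) (Fin N) ℝ) (B : Matrix (Fin n) (Fin q) ℝ)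
    (Zf : (Fin n → ℝ) → (Fin N → ℝ))
    (W : (Fin n → ℝ) → Matrix (Fin q) (Fin m) ℝ)
    (Zhat : (Fin n → ℝ) → (Fin p → ℝ))
    (Hm : (Fin n → ℝ) → Matrix (Fin N) (Fin p) ℝ)
    (G : (Fin n → ℝ) → Matrix (Fin p) (Fin n) ℝ)
    -- `Ẑ` is differentiable with Jacobian `G(x)` at every point
    (hZhat : ∀ y : Fin n → ℝ,
      HasFDerivAt Zhat ((Matrix.mulVecLin (G y)).toContinuousLinearMap) y)
    -- `Z(x) = H(x) Ẑ(x)`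
    (hZH : ∀ y : Fin n → ℝ, Zf y = (Hm y).mulVec (Zhat y))
    (U₀ : Matrix (Fin m) (Fin T) ℝ) (Z₀ : Matrix (Fin N) (Fin T) ℝ)
    (Ubar₀ : Matrix (Fin q) (Fin T) ℝ)
    (D₀ X₁ : Matrix (Fin n) (Fin T) ℝ)
    (R_D : Matrix (Fin n) (Fin T) ℝ) (R_B : Matrix (Fin n) (Fin q) ℝ)
    -- the data equation
    (hdata : X₁ = A * Z₀ + B * Ubar₀ + D₀)
    -- bounds on the noise and on `B`
    (hD : (R_D * R_Dᵀ - D₀ * D₀ᵀ).PosSemidef)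
    (hB : (R_B * R_Bᵀ - B * Bᵀ).PosSemidef)
    (P : Matrix (Fin p) (Fin p) ℝ) (hP : P.PosDef)
    (Y : (Fin n → ℝ) → Matrix (Fin T) (Fin p) ℝ)
    (ε₁ : (Fin n → ℝ) → ℝ) (hε₁ : ∀ y, 0 ≤ ε₁ y)
    (ε₂ : ℝ) (hε₂ : 0 < ε₂)
    -- consistency condition (i): `Z₀ Y(x) = H(x) P`
    (hcons : ∀ y : Fin n → ℝ, Z₀ * Y y = Hm y * P)
    -- pointwise positive semidefiniteness condition (ii)
    (hblock : ∀ y : Fin n → ℝ,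
      (fromBlocks
        ((-(G y * X₁ * Y y) - (Y y)ᵀ * X₁ᵀ * (G y)ᵀ
            - ε₂ • (G y * (fromCols R_B R_D) * (fromCols R_B R_D)ᵀ * (G y)ᵀ))
          - ε₁ y • (1 : Matrix (Fin p) (Fin p) ℝ))
        ((Y y)ᵀ * (fromRows (Ubar₀ - W y * U₀) (1 : Matrix (Fin T) (Fin T) ℝ))ᵀ)
        ((fromRows (Ubar₀ - W y * U₀) (1 : Matrix (Fin T) (Fin T) ℝ)) * Y y)
        (ε₂ • (1 : Matrix (Fin q ⊕ Fin T) (Fin q ⊕ Fin T) ℝ))).PosSemidef)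
    -- a differentiable solution of the closed-loop system
    (x : ℝ → (Fin n → ℝ))
    (hx : ∀ t : ℝ, HasDerivAt x
      (A.mulVec (Zf (x t)) + (B * W (x t) * U₀ * Y (x t) * P⁻¹).mulVec (Zhat (x t))) t) :
    ∀ t : ℝ, ∃ d : ℝ,
      HasDerivAt (fun s => Zhat (x s) ⬝ᵥ (P⁻¹.mulVec (Zhat (x s)))) d t ∧
      d ≤ -(ε₁ (x t)) * (Zhat (x t) ⬝ᵥ ((P⁻¹ * P⁻¹).mulVec (Zhat (x t)))) :=
  lyapunov_decrease_thm1_general A B Zf W Zhat Hm G hZhat hZH U₀ Z₀ Ubar₀ D₀ X₁ R_D R_B hdata hD hB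
    P hP Y ε₁ ε₂ hε₂ hcons hblock x hx
end

section
/- Let G be a real p×n matrix, X₁ and D₀ real n×T matrices, R_D a real n×T matrix with D₀·D₀ᵀ ⪯ R_D·R_Dᵀ, and Y a real T×p matrix. Let ε₁ ≥ 0 be a real number and ε₂ : ℝ a nonnegative real. Set Υ(ε₂) := −G·X₁·Y − Yᵀ·X₁ᵀ·Gᵀ − ε₂·G·R_D·R_Dᵀ·Gᵀ, and assume ε₂ > 0 and that the (p+T)×(p+T) block matrix [[Υ(ε₂) − ε₁·I_p, Yᵀ], [Y, ε₂·I_T]] is positive semidefinite. Then −G·(X₁ − D₀)·Y − Yᵀ·(X₁ − D₀)ᵀ·Gᵀ ⪰ ε₁·I_p. (Pointwise form of the stabilization condition of Remark 1, for input vector fields independent of the state, where the closed-loop dynamics is (X₁ − D₀)·Y(x)·P⁻¹·Ẑ(x).) -/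
/-!
By the Schur complement with respect to the block `ε₂ I`, the block inequality says
`Υ(ε₂) − ε₁ I − ε₂⁻¹ Yᵀ Y ⪰ 0`. Adding to it the two positive semidefinite matrices
`ε₂ G (R_D R_Dᵀ − D₀ D₀ᵀ) Gᵀ` and `ε₂⁻¹ (ε₂ G D₀ + Yᵀ)(ε₂ G D₀ + Yᵀ)ᵀ` gives exactly
`−G (X₁ − D₀) Y − Yᵀ (X₁ − D₀)ᵀ Gᵀ − ε₁ I`.
-/

open Matrix
open scoped ComplexOrder

namespace Matrix

variable {𝕜 : Type*} [RCLike 𝕜] {m n : Type*} [Fintype m] [Fintype n]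

theorem PosSemidef.sub_inv_smul_of_fromBlocks_smul_one [DecidableEq n] {A : Matrix m m 𝕜}
    {B : Matrix n m 𝕜} {c : ℝ} (hc : 0 < c) (h : (fromBlocks A Bᴴ B (c • 1)).PosSemidef) :
    (A - c⁻¹ • (Bᴴ * B)).PosSemidef := by
  have hD : (c • 1 : Matrix n n 𝕜).PosDef := PosDef.one.smul hc
  let _ : Invertible (c • 1 : Matrix n n 𝕜) := invertibleOfRightInverse _ (c⁻¹ • 1) (by
    rw [smul_mul_smul_comm, mul_inv_cancel₀ hc.ne', one_mul, one_smul])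
  have hinv : (c • 1 : Matrix n n 𝕜)⁻¹ = c⁻¹ • 1 := inv_eq_right_inv (by
    rw [smul_mul_smul_comm, mul_inv_cancel₀ hc.ne', one_mul, one_smul])
  have := (PosDef.fromBlocks₂₂ A Bᴴ hD).mp (by rwa [conjTranspose_conjTranspose])
  rwa [hinv, conjTranspose_conjTranspose, Matrix.mul_smul, Matrix.mul_one, Matrix.smul_mul] at this

theorem posSemidef_smul_mul_conjTranspose_add_inv_smul_add {ε : ℝ} (hε : 0 < ε)
    (M : Matrix m n 𝕜) (N : Matrix n m 𝕜) :
    (ε • (M * Mᴴ) + ε⁻¹ • (Nᴴ * N) + (M * N + Nᴴ * Mᴴ)).PosSemidef := by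
  have key : ε • (M * Mᴴ) + ε⁻¹ • (Nᴴ * N) + (M * N + Nᴴ * Mᴴ)
      = ε⁻¹ • ((ε • M + Nᴴ) * (ε • M + Nᴴ)ᴴ) := by
    simp only [conjTranspose_add, conjTranspose_smul, conjTranspose_conjTranspose, star_trivial,
      Matrix.add_mul, Matrix.mul_add, Matrix.smul_mul, Matrix.mul_smul, smul_add, smul_smul,
      inv_mul_cancel₀ hε.ne', inv_mul_cancel_left₀ hε.ne']
    module
  rw [key]
  exact (posSemidef_self_mul_conjTranspose _).smul (inv_nonneg.mpr hε.le)

end Matrix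

theorem stabilization_pointwise_state_independent_input_general {p n T : ℕ}
    (G : Matrix (Fin p) (Fin n) ℝ) (X₁ D₀ : Matrix (Fin n) (Fin T) ℝ)
    (R_D : Matrix (Fin n) (Fin T) ℝ)
    (hD : (R_D * R_Dᵀ - D₀ * D₀ᵀ).PosSemidef)
    (Y : Matrix (Fin T) (Fin p) ℝ)
    (ε₁ : ℝ) (ε₂ : ℝ) (hε₂ : 0 < ε₂)
    (hblock : (fromBlocks
        ((-(G * X₁ * Y) - Yᵀ * X₁ᵀ * Gᵀ - ε₂ • (G * R_D * R_Dᵀ * Gᵀ))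
          - ε₁ • (1 : Matrix (Fin p) (Fin p) ℝ))
        Yᵀ Y
        (ε₂ • (1 : Matrix (Fin T) (Fin T) ℝ))).PosSemidef) :
    ((-(G * (X₁ - D₀) * Y) - Yᵀ * (X₁ - D₀)ᵀ * Gᵀ)
      - ε₁ • (1 : Matrix (Fin p) (Fin p) ℝ)).PosSemidef := by
  rw [← conjTranspose_eq_transpose_of_trivial Y] at hblock
  have hSchur := hblock.sub_inv_smul_of_fromBlocks_smul_one hε₂
  have hDisturbance := (hD.mul_mul_conjTranspose_same G).smul hε₂.le
  have hCross := posSemidef_smul_mul_conjTranspose_add_inv_smul_add hε₂ (G * D₀) Y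
  refine (congrArg PosSemidef ?_).mpr ((hSchur.add hDisturbance).add hCross)
  simp only [conjTranspose_eq_transpose_of_trivial, transpose_mul, transpose_sub,
    Matrix.mul_sub, Matrix.sub_mul, Matrix.mul_assoc, smul_sub]
  module

/-- Pointwise form of the stabilization condition of Remark 1 (input vector field
independent of the state): if `D₀ D₀ᵀ ⪯ R_D R_Dᵀ`, `ε₁ ≥ 0`, `ε₂ > 0`, and the block
matrix `[[Υ(ε₂) − ε₁ I, Yᵀ], [Y, ε₂ I]]` with
`Υ(ε₂) := −G X₁ Y − Yᵀ X₁ᵀ Gᵀ − ε₂ G R_D R_Dᵀ Gᵀ` is positive semidefinite, then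
`−G (X₁ − D₀) Y − Yᵀ (X₁ − D₀)ᵀ Gᵀ ⪰ ε₁ I`. -/
theorem stabilization_pointwise_state_independent_input {p n T : ℕ}
    (G : Matrix (Fin p) (Fin n) ℝ) (X₁ D₀ : Matrix (Fin n) (Fin T) ℝ)
    (R_D : Matrix (Fin n) (Fin T) ℝ)
    (hD : (R_D * R_Dᵀ - D₀ * D₀ᵀ).PosSemidef)
    (Y : Matrix (Fin T) (Fin p) ℝ)
    (ε₁ : ℝ) (hε₁ : 0 ≤ ε₁) (ε₂ : ℝ) (hε₂ : 0 < ε₂)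
    (hblock : (fromBlocks
        ((-(G * X₁ * Y) - Yᵀ * X₁ᵀ * Gᵀ - ε₂ • (G * R_D * R_Dᵀ * Gᵀ))
          - ε₁ • (1 : Matrix (Fin p) (Fin p) ℝ))
        Yᵀ Y
        (ε₂ • (1 : Matrix (Fin T) (Fin T) ℝ))).PosSemidef) :
    ((-(G * (X₁ - D₀) * Y) - Yᵀ * (X₁ - D₀)ᵀ * Gᵀ)
      - ε₁ • (1 : Matrix (Fin p) (Fin p) ℝ)).PosSemidef :=
  stabilization_pointwise_state_independent_input_general G X₁ D₀ R_D hD Y ε₁ ε₂ hε₂ hblock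
end

section
/- Let G be a real p×n matrix, S a real n×r matrix, W̄₀ a real r×T matrix, D₀ and X₁ real n×T matrices with X₁ = S·W̄₀ + D₀, and R_D a real n×T matrix with D₀·D₀ᵀ ⪯ R_D·R_Dᵀ. Let M be a real r×p matrix, let ε₁ ≥ 0 and ε₂ ≥ 0 be real numbers, set Υ_D := ε₂·G·(X₁·X₁ᵀ − R_D·R_Dᵀ)·Gᵀ, and assume that the (p+r)×(p+r) block matrix [[Υ_D − ε₁·I_p, −Mᵀ − ε₂·G·X₁·W̄₀ᵀ], [−M − ε₂·W̄₀·X₁ᵀ·Gᵀ, ε₂·W̄₀·W̄₀ᵀ]] is positive semidefinite. Then −G·S·M − Mᵀ·Sᵀ·Gᵀ ⪰ ε₁·I_p. (Pointwise S-procedure step underlying Theorem 2, with M playing the role of W₀(x)·Y(x).) -/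
/-!
Compressing the block matrix by `[I, G S]` gives
`ε₂ G (X₁ - S W̄₀)(X₁ - S W̄₀)ᵀ Gᵀ - ε₂ G R_D R_Dᵀ Gᵀ - ε₁ I - G S M - Mᵀ Sᵀ Gᵀ`,
and `X₁ - S W̄₀ = D₀`. Adding the positive semidefinite `ε₂ G (R_D R_Dᵀ - D₀ D₀ᵀ) Gᵀ` leaves
`-G S M - Mᵀ Sᵀ Gᵀ - ε₁ I`.
-/

open Matrix

namespace Matrix

variable {m n R : Type*} [Fintype m] [Fintype n] [DecidableEq m] [Ring R] [StarRing R]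

theorem fromCols_one_mul_fromBlocks_mul_conjTranspose (K : Matrix m n R)
    (A : Matrix m m R) (B : Matrix m n R) (C : Matrix n m R) (D : Matrix n n R) :
    fromCols (1 : Matrix m m R) K * fromBlocks A B C D * (fromCols (1 : Matrix m m R) K)ᴴ =
      A + B * Kᴴ + K * C + K * D * Kᴴ := by
  rw [fromCols_mul_fromBlocks, conjTranspose_fromCols_eq_fromRows_conjTranspose,
    fromCols_mul_fromRows, conjTranspose_one, Matrix.one_mul, Matrix.one_mul, Matrix.mul_one,
    Matrix.add_mul]
  abel

theorem PosSemidef.of_fromBlocks_compress [PartialOrder R] [StarOrderedRing R] {K : Matrix m n R}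
    {A : Matrix m m R} {B : Matrix m n R} {C : Matrix n m R} {D : Matrix n n R}
    (h : (fromBlocks A B C D).PosSemidef) : (A + B * Kᴴ + K * C + K * D * Kᴴ).PosSemidef :=
  fromCols_one_mul_fromBlocks_mul_conjTranspose K A B C D ▸ h.mul_mul_conjTranspose_same _

end Matrix

theorem s_procedure_pointwise_thm2_general {p n r T : ℕ}
    (G : Matrix (Fin p) (Fin n) ℝ)
    (S : Matrix (Fin n) (Fin r) ℝ) (Wbar₀ : Matrix (Fin r) (Fin T) ℝ)
    (D₀ X₁ : Matrix (Fin n) (Fin T) ℝ) (hdata : X₁ = S * Wbar₀ + D₀)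
    (R_D : Matrix (Fin n) (Fin T) ℝ)
    (hD : (R_D * R_Dᵀ - D₀ * D₀ᵀ).PosSemidef)
    (M : Matrix (Fin r) (Fin p) ℝ)
    (ε₁ ε₂ : ℝ) (hε₂ : 0 ≤ ε₂)
    (hblock : (fromBlocks
        (ε₂ • (G * (X₁ * X₁ᵀ - R_D * R_Dᵀ) * Gᵀ) - ε₁ • (1 : Matrix (Fin p) (Fin p) ℝ))
        (-Mᵀ - ε₂ • (G * X₁ * Wbar₀ᵀ))
        (-M - ε₂ • (Wbar₀ * X₁ᵀ * Gᵀ))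
        (ε₂ • (Wbar₀ * Wbar₀ᵀ))).PosSemidef) :
    ((-(G * S * M) - Mᵀ * Sᵀ * Gᵀ) - ε₁ • (1 : Matrix (Fin p) (Fin p) ℝ)).PosSemidef := by
  have hcompress := hblock.of_fromBlocks_compress (K := G * S)
  have hnoise := (hD.smul hε₂).mul_mul_conjTranspose_same G
  have hsquare : D₀ * D₀ᵀ =
      X₁ * X₁ᵀ - X₁ * Wbar₀ᵀ * Sᵀ - S * Wbar₀ * X₁ᵀ + S * Wbar₀ * Wbar₀ᵀ * Sᵀ := by
    rw [eq_sub_of_add_eq' hdata.symm]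
    simp only [transpose_sub, transpose_mul, Matrix.mul_sub, Matrix.sub_mul, Matrix.mul_assoc]
    abel
  convert hcompress.add hnoise using 1
  simp only [hsquare, conjTranspose_eq_transpose_of_trivial, transpose_mul, Matrix.mul_add,
    Matrix.add_mul, Matrix.mul_sub, Matrix.sub_mul, Matrix.smul_mul, Matrix.mul_smul,
    Matrix.mul_assoc, Matrix.neg_mul, Matrix.mul_neg, smul_sub, smul_add]
  abel

/-- Pointwise S-procedure step underlying Theorem 2: if `X₁ = S W̄₀ + D₀`,
`D₀ D₀ᵀ ⪯ R_D R_Dᵀ`, `ε₁ ≥ 0`, `ε₂ ≥ 0`, and the block matrix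
`[[Υ_D − ε₁ I, −Mᵀ − ε₂ G X₁ W̄₀ᵀ], [−M − ε₂ W̄₀ X₁ᵀ Gᵀ, ε₂ W̄₀ W̄₀ᵀ]]` with
`Υ_D := ε₂ G (X₁ X₁ᵀ − R_D R_Dᵀ) Gᵀ` is positive semidefinite, then
`−G S M − Mᵀ Sᵀ Gᵀ ⪰ ε₁ I`. -/
theorem s_procedure_pointwise_thm2 {p n r T : ℕ}
    (G : Matrix (Fin p) (Fin n) ℝ)
    (S : Matrix (Fin n) (Fin r) ℝ) (Wbar₀ : Matrix (Fin r) (Fin T) ℝ)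
    (D₀ X₁ : Matrix (Fin n) (Fin T) ℝ) (hdata : X₁ = S * Wbar₀ + D₀)
    (R_D : Matrix (Fin n) (Fin T) ℝ)
    (hD : (R_D * R_Dᵀ - D₀ * D₀ᵀ).PosSemidef)
    (M : Matrix (Fin r) (Fin p) ℝ)
    (ε₁ ε₂ : ℝ) (hε₁ : 0 ≤ ε₁) (hε₂ : 0 ≤ ε₂)
    (hblock : (fromBlocks
        (ε₂ • (G * (X₁ * X₁ᵀ - R_D * R_Dᵀ) * Gᵀ) - ε₁ • (1 : Matrix (Fin p) (Fin p) ℝ))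
        (-Mᵀ - ε₂ • (G * X₁ * Wbar₀ᵀ))
        (-M - ε₂ • (Wbar₀ * X₁ᵀ * Gᵀ))
        (ε₂ • (Wbar₀ * Wbar₀ᵀ))).PosSemidef) :
    ((-(G * S * M) - Mᵀ * Sᵀ * Gᵀ) - ε₁ • (1 : Matrix (Fin p) (Fin p) ℝ)).PosSemidef :=
  s_procedure_pointwise_thm2_general G S Wbar₀ D₀ X₁ hdata R_D hD M ε₁ ε₂ hε₂ hblock
end

section
/- Consider the nonlinear system ẋ = A·Z(x) + B·W(x)·u with state x ∈ ℝⁿ and input u ∈ ℝᵐ, where A is a real n×N matrix, B a real n×q matrix, Z : ℝⁿ → ℝᴺ, and W : ℝⁿ → ℝ^{q×m}. Let Ẑ : ℝⁿ → ℝᵖ be differentiable and H : ℝⁿ → ℝ^{N×p} satisfy Z(x) = H(x)·Ẑ(x) for all x. Let U₀ ∈ ℝ^{m×T}, Z₀ ∈ ℝ^{N×T}, Ū₀ ∈ ℝ^{q×T}, D₀, X₁ ∈ ℝ^{n×T} satisfy X₁ = A·Z₀ + B·Ū₀ + D₀, and assume D₀·D₀ᵀ ⪯ R_D·R_Dᵀ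 for a given R_D ∈ ℝ^{n×T}. Set S := [B A] and W̄₀ := [Ū₀ ; Z₀] ∈ ℝ^{(q+N)×T}. Suppose there exist a positive definite P ∈ ℝ^{p×p}, a map K : ℝⁿ → ℝ^{m×p}, and functions ε₁, ε₂ : ℝⁿ → ℝ with ε₁(x) ≥ 0 and ε₂(x) ≥ 0 such that for all x ∈ ℝⁿ, with G(x) := the Jacobian ∂Ẑ/∂x (a p×n matrix), M(x) := [W(x)·K(x) ; H(x)·P] ∈ ℝ^{(q+N)×p}, and Υ_D(x) := ε₂(x)·G(x)·(X₁·X₁ᵀ − R_D·R_Dᵀ)·G(x)ᵀ, the block matrix [[Υ_D(x) − ε₁(x)·I_p, −M(x)ᵀ − ε₂(x)·G(x)·X₁·W̄₀ᵀ], [−M(x) − ε₂(x)·W̄₀·X₁ᵀ·G(x)ᵀ, ε₂(x)·W̄₀·W̄₀ᵀ]] is positive semidefinite. Then, under the feedback u = K(x)·P⁻¹·Ẑ(x), for every differentiable solution x : ℝ → ℝⁿ of the closed-loop system ẋ = A·Z(x) + B·W(x)·K(x)·P⁻¹·Ẑ(x), the function t ↦ V(x(t)) with V(x) = Ẑ(x)ᵀ·P⁻¹·Ẑ(x)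 has derivative at every time t satisfying d/dt V(x(t)) ≤ −ε₁(x(t))·Ẑ(x(t))ᵀ·P⁻¹·P⁻¹·Ẑ(x(t)). (Lyapunov decrease conclusion of Corollary 1, with the SOS conditions relaxed to pointwise positive semidefiniteness; the decision variable K(x) has size independent of the number of data T.) -/
/-!
Put `v = P⁻¹ Ẑ(x)`, `S = [B A]` and `E = G(x) S M(x)`. Since `Z = H Ẑ = H P v`, the closed loop
is `ẋ = S M(x) v`, so `dV/dt = vᵀ (E + Eᵀ) v`. Compressing the block matrix by `[I ; (G S)ᵀ]`
and substituting `X₁ = S W̄₀ + D₀` leaves `ε₂ G (D₀ D₀ᵀ - R_D R_Dᵀ) Gᵀ - ε₁ I - E - Eᵀ ⪰ 0`;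
the noise bound makes the first term `⪯ 0`, hence `vᵀ (E + Eᵀ) v ≤ -ε₁ vᵀ v`.
-/

open Matrix

section Deriv

variable {𝕜 ι κ : Type*} [NontriviallyNormedField 𝕜] [Fintype ι]
  {f g : 𝕜 → ι → 𝕜} {f' g' : ι → 𝕜} {t : 𝕜}

theorem HasDerivAt.dotProduct (hf : HasDerivAt f f' t) (hg : HasDerivAt g g' t) :
    HasDerivAt (fun s => f s ⬝ᵥ g s) (f' ⬝ᵥ g t + f t ⬝ᵥ g') t := by
  have h := HasDerivAt.fun_sum (u := Finset.univ) fun i _ =>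
    (hasDerivAt_pi.1 hf i).fun_mul (hasDerivAt_pi.1 hg i)
  rw [Finset.sum_add_distrib] at h
  exact h

theorem HasDerivAt.mulVec (Q : Matrix κ ι 𝕜) (hf : HasDerivAt f f' t) :
    HasDerivAt (fun s => Q *ᵥ f s) (Q *ᵥ f') t := by
  refine hasDerivAt_pi.2 fun i => ?_
  have h := (hasDerivAt_const t (Q i)).dotProduct hf
  rw [zero_dotProduct, zero_add] at h
  exact h

end Deriv

section Block

variable {α β : Type*} [Fintype α] [Fintype β] [DecidableEq α]

theorem transpose_fromRows_one_mul_fromBlocks_mul_fromRows_one {R : Type*} [CommRing R]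
    (TL : Matrix α α R) (TR : Matrix α β R) (BL : Matrix β α R) (BR : Matrix β β R)
    (J : Matrix β α R) :
    (fromRows (1 : Matrix α α R) J)ᵀ * fromBlocks TL TR BL BR * fromRows (1 : Matrix α α R) J
      = TL + TR * J + Jᵀ * BL + Jᵀ * BR * J := by
  rw [transpose_fromRows, fromCols_mul_fromBlocks, fromCols_mul_fromRows]
  simp only [transpose_one, Matrix.one_mul, Matrix.mul_one, Matrix.add_mul]
  abel

theorem Matrix.PosSemidef.fromBlocks_compress {TL : Matrix α α ℝ} {TR : Matrix α β ℝ}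
    {BL : Matrix β α ℝ} {BR : Matrix β β ℝ} (h : (fromBlocks TL TR BL BR).PosSemidef)
    (J : Matrix β α ℝ) : (TL + TR * J + Jᵀ * BL + Jᵀ * BR * J).PosSemidef := by
  rw [← transpose_fromRows_one_mul_fromBlocks_mul_fromRows_one,
    ← conjTranspose_eq_transpose_of_trivial]
  exact h.conjTranspose_mul_mul_same _

theorem posSemidef_closedLoop_of_dataLMI {ι κ : Type*} [Fintype ι] [Fintype κ]
    {G : Matrix α ι ℝ} {S : Matrix ι β ℝ} {M : Matrix β α ℝ} {W₀ : Matrix β κ ℝ}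
    {D₀ R_D X₁ : Matrix ι κ ℝ} {ε₁ ε₂ : ℝ}
    (hdata : X₁ = S * W₀ + D₀) (hD : (R_D * R_Dᵀ - D₀ * D₀ᵀ).PosSemidef) (hε₂ : 0 ≤ ε₂)
    (hblock : (fromBlocks
        (ε₂ • (G * (X₁ * X₁ᵀ - R_D * R_Dᵀ) * Gᵀ) - ε₁ • (1 : Matrix α α ℝ))
        (-Mᵀ - ε₂ • (G * X₁ * W₀ᵀ))
        (-M - ε₂ • (W₀ * X₁ᵀ * Gᵀ))
        (ε₂ • (W₀ * W₀ᵀ))).PosSemidef) :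
    (-(G * S * M) - (G * S * M)ᵀ - ε₁ • (1 : Matrix α α ℝ)).PosSemidef := by
  have hnoise : (ε₂ • (G * (R_D * R_Dᵀ - D₀ * D₀ᵀ) * Gᵀ)).PosSemidef := by
    rw [← conjTranspose_eq_transpose_of_trivial]
    exact (hD.mul_mul_conjTranspose_same G).smul hε₂
  convert (hblock.fromBlocks_compress (G * S)ᵀ).add hnoise using 1
  subst hdata
  simp only [transpose_mul, transpose_add, transpose_transpose, Matrix.mul_add, Matrix.add_mul,
    Matrix.mul_sub, Matrix.sub_mul, Matrix.neg_mul, Matrix.mul_neg, Matrix.smul_mul,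
    Matrix.mul_smul, Matrix.mul_assoc]
  module

end Block

theorem mulVec_add_mulVec_eq_fromCols_mul_fromRows {R n N q m p : Type*} [CommRing R]
    [Fintype N] [Fintype q] [Fintype m] [Fintype p] [DecidableEq p]
    (A : Matrix n N R) (B : Matrix n q R) (W : Matrix q m R) (K : Matrix m p R)
    (H : Matrix N p R) {P : Matrix p p R} (hP : IsUnit P.det) (z : p → R) :
    A *ᵥ (H *ᵥ z) + (B * W * K * P⁻¹) *ᵥ z
      = (fromCols B A * fromRows (W * K) (H * P)) *ᵥ (P⁻¹ *ᵥ z) := by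
  rw [fromCols_mul_fromRows, add_mulVec, add_comm, mulVec_mulVec, mulVec_mulVec, mulVec_mulVec,
    Matrix.mul_assoc A, Matrix.mul_assoc H, mul_nonsing_inv P hP, Matrix.mul_one,
    Matrix.mul_assoc B W K]

theorem lyapunov_decrease_cor1_general {n m N q p T : ℕ}
    (A : Matrix (Fin n) (Fin N) ℝ) (B : Matrix (Fin n) (Fin q) ℝ)
    (Zf : (Fin n → ℝ) → (Fin N → ℝ))
    (W : (Fin n → ℝ) → Matrix (Fin q) (Fin m) ℝ)
    (Zhat : (Fin n → ℝ) → (Fin p → ℝ))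
    (Hm : (Fin n → ℝ) → Matrix (Fin N) (Fin p) ℝ)
    (G : (Fin n → ℝ) → Matrix (Fin p) (Fin n) ℝ)
    -- `Ẑ` is differentiable with Jacobian `G(x)` at every point
    (hZhat : ∀ y : Fin n → ℝ,
      HasFDerivAt Zhat ((Matrix.mulVecLin (G y)).toContinuousLinearMap) y)
    -- `Z(x) = H(x) Ẑ(x)`
    (hZH : ∀ y : Fin n → ℝ, Zf y = (Hm y).mulVec (Zhat y))
    (Z₀ : Matrix (Fin N) (Fin T) ℝ)
    (Ubar₀ : Matrix (Fin q) (Fin T) ℝ)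
    (D₀ X₁ : Matrix (Fin n) (Fin T) ℝ)
    (R_D : Matrix (Fin n) (Fin T) ℝ)
    -- the data equation
    (hdata : X₁ = A * Z₀ + B * Ubar₀ + D₀)
    -- bound on the noise
    (hD : (R_D * R_Dᵀ - D₀ * D₀ᵀ).PosSemidef)
    (P : Matrix (Fin p) (Fin p) ℝ) (hP : P.PosDef)
    (K : (Fin n → ℝ) → Matrix (Fin m) (Fin p) ℝ)
    (ε₁ ε₂ : (Fin n → ℝ) → ℝ) (hε₂ : ∀ y, 0 ≤ ε₂ y)
    -- pointwise positive semidefiniteness condition, with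
    -- `M(x) := [W(x) K(x) ; H(x) P]` and `W̄₀ := [Ū₀ ; Z₀]`
    (hblock : ∀ y : Fin n → ℝ,
      (fromBlocks
        (ε₂ y • (G y * (X₁ * X₁ᵀ - R_D * R_Dᵀ) * (G y)ᵀ)
          - ε₁ y • (1 : Matrix (Fin p) (Fin p) ℝ))
        (-(fromRows (W y * K y) (Hm y * P))ᵀ
          - ε₂ y • (G y * X₁ * (fromRows Ubar₀ Z₀)ᵀ))
        (-(fromRows (W y * K y) (Hm y * P))
          - ε₂ y • ((fromRows Ubar₀ Z₀) * X₁ᵀ * (G y)ᵀ))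
        (ε₂ y • ((fromRows Ubar₀ Z₀) * (fromRows Ubar₀ Z₀)ᵀ))).PosSemidef)
    -- a differentiable solution of the closed-loop system
    (x : ℝ → (Fin n → ℝ))
    (hx : ∀ t : ℝ, HasDerivAt x
      (A.mulVec (Zf (x t)) + (B * W (x t) * K (x t) * P⁻¹).mulVec (Zhat (x t))) t) :
    ∀ t : ℝ, ∃ d : ℝ,
      HasDerivAt (fun s => Zhat (x s) ⬝ᵥ (P⁻¹.mulVec (Zhat (x s)))) d t ∧
      d ≤ -(ε₁ (x t)) * (Zhat (x t) ⬝ᵥ ((P⁻¹ * P⁻¹).mulVec (Zhat (x t)))) := by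
  intro t
  set v := P⁻¹ *ᵥ Zhat (x t)
  have hPinv : P⁻¹ᵀ = P⁻¹ := by
    rw [← conjTranspose_eq_transpose_of_trivial]; exact hP.isHermitian.inv
  set E := G (x t) * fromCols B A * fromRows (W (x t) * K (x t)) (Hm (x t) * P)
  have hflow : HasDerivAt (fun s => Zhat (x s)) (E *ᵥ v) t := by
    have h := (hZhat (x t)).comp_hasDerivAt t (hx t)
    rw [hZH, mulVec_add_mulVec_eq_fromCols_mul_fromRows _ _ _ _ _
      (isUnit_iff_ne_zero.2 hP.det_pos.ne')] at h
    refine h.congr_deriv ?_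
    simp only [E, v, LinearMap.coe_toContinuousLinearMap', mulVecLin_apply, mulVec_mulVec,
      Matrix.mul_assoc]
  refine ⟨_, hflow.dotProduct (hflow.mulVec P⁻¹), ?_⟩
  have hsymm : ∀ w, Zhat (x t) ⬝ᵥ (P⁻¹ *ᵥ w) = v ⬝ᵥ w := fun w => by
    rw [dotProduct_mulVec, ← hPinv, vecMul_transpose]
  have hdata' : X₁ = fromCols B A * fromRows Ubar₀ Z₀ + D₀ := by
    rw [hdata, fromCols_mul_fromRows]; abel
  have hLMI := (posSemidef_closedLoop_of_dataLMI hdata' hD (hε₂ (x t))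
    (hblock (x t))).dotProduct_mulVec_nonneg v
  simp only [star_trivial, sub_mulVec, neg_mulVec, smul_mulVec, one_mulVec, dotProduct_sub,
    dotProduct_neg, dotProduct_smul, smul_eq_mul, dotProduct_transpose_mulVec] at hLMI
  rw [← mulVec_mulVec (Zhat (x t)) P⁻¹ P⁻¹, hsymm, hsymm, dotProduct_comm (E *ᵥ v)]
  linarith

/-- Lyapunov decrease conclusion of Corollary 1 (decision variable `K(x)` of size
independent of the number of data `T`), with the SOS conditions relaxed to pointwise
positive semidefiniteness: along every solution of the closed-loop system
`ẋ = A Z(x) + B W(x) K(x) P⁻¹ Ẑ(x)`, the function `V(x) = Ẑ(x)ᵀ P⁻¹ Ẑ(x)` satisfies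
`d/dt V(x(t)) ≤ −ε₁(x(t)) Ẑ(x(t))ᵀ P⁻¹ P⁻¹ Ẑ(x(t))`. -/
theorem lyapunov_decrease_cor1 {n m N q p T : ℕ}
    (A : Matrix (Fin n) (Fin N) ℝ) (B : Matrix (Fin n) (Fin q) ℝ)
    (Zf : (Fin n → ℝ) → (Fin N → ℝ))
    (W : (Fin n → ℝ) → Matrix (Fin q) (Fin m) ℝ)
    (Zhat : (Fin n → ℝ) → (Fin p → ℝ))
    (Hm : (Fin n → ℝ) → Matrix (Fin N) (Fin p) ℝ)
    (G : (Fin n → ℝ) → Matrix (Fin p) (Fin n) ℝ)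
    -- `Ẑ` is differentiable with Jacobian `G(x)` at every point
    (hZhat : ∀ y : Fin n → ℝ,
      HasFDerivAt Zhat ((Matrix.mulVecLin (G y)).toContinuousLinearMap) y)
    -- `Z(x) = H(x) Ẑ(x)`
    (hZH : ∀ y : Fin n → ℝ, Zf y = (Hm y).mulVec (Zhat y))
    (U₀ : Matrix (Fin m) (Fin T) ℝ) (Z₀ : Matrix (Fin N) (Fin T) ℝ)
    (Ubar₀ : Matrix (Fin q) (Fin T) ℝ)
    (D₀ X₁ : Matrix (Fin n) (Fin T) ℝ)
    (R_D : Matrix (Fin n) (Fin T) ℝ)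
    -- the data equation
    (hdata : X₁ = A * Z₀ + B * Ubar₀ + D₀)
    -- bound on the noise
    (hD : (R_D * R_Dᵀ - D₀ * D₀ᵀ).PosSemidef)
    (P : Matrix (Fin p) (Fin p) ℝ) (hP : P.PosDef)
    (K : (Fin n → ℝ) → Matrix (Fin m) (Fin p) ℝ)
    (ε₁ ε₂ : (Fin n → ℝ) → ℝ) (hε₁ : ∀ y, 0 ≤ ε₁ y) (hε₂ : ∀ y, 0 ≤ ε₂ y)
    -- pointwise positive semidefiniteness condition, with
    -- `M(x) := [W(x) K(x) ; H(x) P]` and `W̄₀ := [Ū₀ ; Z₀]`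
    (hblock : ∀ y : Fin n → ℝ,
      (fromBlocks
        (ε₂ y • (G y * (X₁ * X₁ᵀ - R_D * R_Dᵀ) * (G y)ᵀ)
          - ε₁ y • (1 : Matrix (Fin p) (Fin p) ℝ))
        (-(fromRows (W y * K y) (Hm y * P))ᵀ
          - ε₂ y • (G y * X₁ * (fromRows Ubar₀ Z₀)ᵀ))
        (-(fromRows (W y * K y) (Hm y * P))
          - ε₂ y • ((fromRows Ubar₀ Z₀) * X₁ᵀ * (G y)ᵀ))
        (ε₂ y • ((fromRows Ubar₀ Z₀) * (fromRows Ubar₀ Z₀)ᵀ))).PosSemidef)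
    -- a differentiable solution of the closed-loop system
    (x : ℝ → (Fin n → ℝ))
    (hx : ∀ t : ℝ, HasDerivAt x
      (A.mulVec (Zf (x t)) + (B * W (x t) * K (x t) * P⁻¹).mulVec (Zhat (x t))) t) :
    ∀ t : ℝ, ∃ d : ℝ,
      HasDerivAt (fun s => Zhat (x s) ⬝ᵥ (P⁻¹.mulVec (Zhat (x s)))) d t ∧
      d ≤ -(ε₁ (x t)) * (Zhat (x t) ⬝ᵥ ((P⁻¹ * P⁻¹).mulVec (Zhat (x t)))) :=
  lyapunov_decrease_cor1_general A B Zf W Zhat Hm G hZhat hZH Z₀ Ubar₀ D₀ X₁ R_D hdata hD P hP K ε₁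
    ε₂ hε₂ hblock x hx
end
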